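/- arXiv:1907.01746 — 2 statements merged into one kernel-verified Lean document; each statement's English description precedes it below -/
import Mathlib

section
/- For α > 0, ω > 0 and t ≥ 0, (ω / Γ(α)) ∫_0^t (t-s)^{α-1} E_α(ω s^α) ds = E_α(ω t^α) - 1, where E_α(z) = ∑_{k=0}^∞ z^k / Γ(kα + 1) is the one-parameter Mittag-Leffler function; in particular this integral is ≤ (Γ(α)/ω) E_α(ω t^α). -/
/-!
Integrating the series of `E_α(ω s^α)` termwise against `(t - s)^(α - 1)`, the Beta integral
`∫₀ᵗ (t - s)^(α-1) s^(kα) ds = Γ(α) Γ(kα + 1) / Γ((k + 1)α + 1) · t^((k+1)α)` turns the `k`-th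
term into `Γ(α)/ω` times the `(k + 1)`-st term of `E_α(ω t^α)`, so the integral is
`Γ(α)/ω · (E_α(ω t^α) - 1)`. Summation and integration commute because all terms are nonnegative
and the series of integrals converges: `Γ(y) ≥ e^{-r} r^{y-1}` makes `1 / Γ(kα + 1)` decay faster
than any geometric sequence.
-/

/-- The one-parameter Mittag-Leffler function. -/
noncomputable def mittagLeffler (α z : ℝ) : ℝ :=
  ∑' k : ℕ, z ^ k / Real.Gamma (k * α + 1)

open MeasureTheory Set intervalIntegral

theorem Real.exp_neg_mul_rpow_sub_one_le_Gamma {y r : ℝ} (hy : 1 ≤ y) (hr : 0 < r) :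
    Real.exp (-r) * r ^ (y - 1) ≤ Real.Gamma y := by
  have hy0 : 0 < y := by linarith
  have hΓ := Real.GammaIntegral_convergent hy0
  calc Real.exp (-r) * r ^ (y - 1) = ∫ x in Ioi r, Real.exp (-x) * r ^ (y - 1) := by
        rw [MeasureTheory.integral_mul_const, integral_exp_neg_Ioi]
    _ ≤ ∫ x in Ioi r, Real.exp (-x) * x ^ (y - 1) := by
        refine setIntegral_mono_on ((integrableOn_exp_neg_Ioi r).mul_const _)
          (hΓ.mono_set (Ioi_subset_Ioi hr.le)) measurableSet_Ioi fun x hx => ?_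
        exact mul_le_mul_of_nonneg_left (Real.rpow_le_rpow hr.le (le_of_lt hx) (by linarith))
          (Real.exp_nonneg _)
    _ ≤ ∫ x in Ioi 0, Real.exp (-x) * x ^ (y - 1) := by
        refine setIntegral_mono_set hΓ ?_ (Ioi_subset_Ioi hr.le).eventuallyLE
        filter_upwards [ae_restrict_mem measurableSet_Ioi] with x (hx : 0 < x)
        positivity
    _ = Real.Gamma y := (Real.Gamma_eq_integral hy0).symm

theorem summable_pow_div_Gamma_mul_add_one {α : ℝ} (hα : 0 < α) (z : ℝ) :
    Summable fun k : ℕ => z ^ k / Real.Gamma (k * α + 1) := by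
  set q := 2 * |z| + 1
  have hq : 0 < q := by positivity
  set r := q ^ α⁻¹
  have hr : 0 < r := Real.rpow_pos_of_pos hq _
  -- `r` is chosen so that `r ^ (k * α) = q ^ k` outgrows `|z| ^ k` geometrically.
  have hΓ (k : ℕ) : Real.exp (-r) * q ^ k ≤ Real.Gamma (k * α + 1) := by
    have hrpow : r ^ ((k * α + 1 : ℝ) - 1) = q ^ k := by
      rw [add_sub_cancel_right, mul_comm, Real.rpow_mul hr.le, Real.rpow_inv_rpow hq.le hα.ne',
        Real.rpow_natCast]
    have hk : 0 ≤ (k : ℝ) * α := by positivity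
    simpa only [hrpow] using
      Real.exp_neg_mul_rpow_sub_one_le_Gamma (y := k * α + 1) (by linarith) hr
  have hratio : |z| / q < 1 := (div_lt_one hq).mpr (by linarith [abs_nonneg z])
  refine Summable.of_norm_bounded
    ((summable_geometric_of_lt_one (by positivity) hratio).mul_left (Real.exp r)) fun k => ?_
  calc ‖z ^ k / Real.Gamma (k * α + 1)‖ = |z| ^ k / Real.Gamma (k * α + 1) := by
        rw [Real.norm_eq_abs, abs_div, abs_pow, abs_of_pos (Real.Gamma_pos_of_pos (by positivity))]
    _ ≤ |z| ^ k / (Real.exp (-r) * q ^ k) := by gcongr; exact hΓ k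
    _ = Real.exp r * (|z| / q) ^ k := by rw [Real.exp_neg, div_pow]; field_simp

theorem hasSum_mittagLeffler_sub_one {α : ℝ} (hα : 0 < α) (z : ℝ) :
    HasSum (fun k : ℕ => z ^ (k + 1) / Real.Gamma ((k + 1 : ℕ) * α + 1))
      (mittagLeffler α z - 1) := by
  have h := (summable_pow_div_Gamma_mul_add_one hα z).hasSum
  rw [← hasSum_nat_add_iff' 1] at h
  simpa [mittagLeffler, Real.Gamma_one] using h

theorem integral_sub_rpow_mul_rpow {a b t : ℝ} (ha : 0 < a) (hb : -1 < b) (ht : 0 < t) :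
    ∫ s in (0 : ℝ)..t, (t - s) ^ (a - 1) * s ^ b =
      Real.Gamma a * Real.Gamma (b + 1) / Real.Gamma (a + b + 1) * t ^ (a + b) := by
  have hb1 : 0 < b + 1 := by linarith
  have hΓ : Complex.Gamma (a + b + 1 : ℝ) ≠ 0 := by
    rw [Complex.Gamma_ofReal]
    exact_mod_cast (Real.Gamma_pos_of_pos (by linarith)).ne'
  have hbeta : Complex.betaIntegral (b + 1 : ℝ) a =
      Complex.Gamma a * Complex.Gamma (b + 1 : ℝ) / Complex.Gamma (a + b + 1 : ℝ) := by
    have h := Complex.Gamma_mul_Gamma_eq_betaIntegral (s := (b + 1 : ℝ)) (t := a)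
      (by simpa using hb1) (by simpa using ha)
    rw [eq_div_iff hΓ, mul_comm (Complex.Gamma a), h]
    push_cast
    ring_nf
  have hscaled := Complex.betaIntegral_scaled (b + 1 : ℝ) a ht
  apply Complex.ofReal_injective
  rw [← intervalIntegral.integral_ofReal]
  calc ∫ s in (0 : ℝ)..t, (((t - s) ^ (a - 1) * s ^ b : ℝ) : ℂ)
      = ∫ s in (0 : ℝ)..t, (s : ℂ) ^ (((b + 1 : ℝ) : ℂ) - 1) * ((t : ℂ) - s) ^ ((a : ℂ) - 1) := by
        refine intervalIntegral.integral_congr fun s hs => ?_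
        rw [uIcc_of_le ht.le] at hs
        rw [Complex.ofReal_mul, Complex.ofReal_cpow (by linarith [hs.2]),
          Complex.ofReal_cpow hs.1]
        push_cast
        ring_nf
    _ = _ := by
        rw [hscaled, hbeta, show ((b + 1 : ℝ) : ℂ) + a - 1 = (a + b : ℝ) by push_cast; ring,
          ← Complex.ofReal_cpow ht.le]
        simp only [Complex.Gamma_ofReal]
        push_cast
        ring

theorem intervalIntegrable_sub_rpow_mul {r t a b : ℝ} {g : ℝ → ℝ} (hr : -1 < r)
    (hg : ContinuousOn g (uIcc a b)) :
    IntervalIntegrable (fun s => (t - s) ^ r * g s) volume a b := by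
  have h := (intervalIntegrable_rpow' hr (a := t - a) (b := t - b)).comp_sub_left t
  simp only [sub_sub_cancel] at h
  exact h.mul_continuousOn hg

theorem hasSum_intervalIntegral_of_nonneg {ι : Type*} [Countable ι] {F : ι → ℝ → ℝ} {a b : ℝ}
    (hab : a ≤ b) (hF_int : ∀ i, IntervalIntegrable (F i) volume a b)
    (hF_nonneg : ∀ i, ∀ s ∈ Ioc a b, 0 ≤ F i s)
    (hF_sum : Summable fun i => ∫ s in a..b, F i s) :
    HasSum (fun i => ∫ s in a..b, F i s) (∫ s in a..b, ∑' i, F i s) := by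
  simp only [integral_of_le hab] at hF_sum ⊢
  refine hasSum_integral_of_summable_integral_norm (fun i => (hF_int i).1)
    (hF_sum.congr fun i => ?_)
  exact setIntegral_congr_fun measurableSet_Ioc fun s hs =>
    (Real.norm_of_nonneg (hF_nonneg i s hs)).symm

theorem mul_integral_sub_rpow_mul_pow_div_Gamma {α : ℝ} (hα : 0 < α) (ω : ℝ) {t : ℝ} (ht : 0 ≤ t)
    (k : ℕ) :
    ω / Real.Gamma α *
        ∫ s in (0 : ℝ)..t, (t - s) ^ (α - 1) * ((ω * s ^ α) ^ k / Real.Gamma (k * α + 1)) =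
      (ω * t ^ α) ^ (k + 1) / Real.Gamma ((k + 1 : ℕ) * α + 1) := by
  rcases ht.eq_or_lt with rfl | ht
  · simp [Real.zero_rpow hα.ne']
  have hpow (s : ℝ) (hs : 0 ≤ s) (n : ℕ) : (ω * s ^ α) ^ n = ω ^ n * s ^ (n * α) := by
    rw [mul_pow, ← Real.rpow_natCast (s ^ α), ← Real.rpow_mul hs, mul_comm α]
  have hkα : -1 < (k : ℝ) * α := by linarith [show 0 ≤ (k : ℝ) * α by positivity]
  calc ω / Real.Gamma α *
        ∫ s in (0 : ℝ)..t, (t - s) ^ (α - 1) * ((ω * s ^ α) ^ k / Real.Gamma (k * α + 1))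
      = ω / Real.Gamma α * (ω ^ k / Real.Gamma (k * α + 1) *
          ∫ s in (0 : ℝ)..t, (t - s) ^ (α - 1) * s ^ (k * α)) := by
        rw [← intervalIntegral.integral_const_mul (ω ^ k / Real.Gamma (k * α + 1))]
        congr 1
        refine intervalIntegral.integral_congr fun s hs => ?_
        rw [uIcc_of_le ht.le] at hs
        simp only [hpow s hs.1]
        ring
    _ = ω ^ (k + 1) * t ^ ((k + 1 : ℕ) * α) / Real.Gamma ((k + 1 : ℕ) * α + 1) := by
        rw [integral_sub_rpow_mul_rpow hα hkα ht,
          show α + k * α + 1 = (k + 1 : ℕ) * α + 1 by push_cast; ring,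
          show α + k * α = (k + 1 : ℕ) * α by push_cast; ring]
        field_simp
        ring
    _ = (ω * t ^ α) ^ (k + 1) / Real.Gamma ((k + 1 : ℕ) * α + 1) := by rw [hpow t ht.le]

theorem hasSum_integral_sub_rpow_mul_mittagLeffler {α ω t : ℝ} (hα : 0 < α) (hω : 0 < ω)
    (ht : 0 ≤ t) :
    HasSum
      (fun k : ℕ =>
        ∫ s in (0 : ℝ)..t, (t - s) ^ (α - 1) * ((ω * s ^ α) ^ k / Real.Gamma (k * α + 1)))
      (∫ s in (0 : ℝ)..t, (t - s) ^ (α - 1) * mittagLeffler α (ω * s ^ α)) := by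
  simp only [mittagLeffler, ← tsum_mul_left]
  refine hasSum_intervalIntegral_of_nonneg ht
    (fun k => intervalIntegrable_sub_rpow_mul (by linarith) ?_) (fun k s hs => ?_) ?_
  · exact (((continuous_const.mul (Real.continuous_rpow_const hα.le)).pow k).div_const _)
      |>.continuousOn
  · have hts : 0 ≤ t - s := by linarith [hs.2]
    have hs0 : 0 ≤ s := hs.1.le
    positivity
  · have hI (k : ℕ) :
        ∫ s in (0 : ℝ)..t, (t - s) ^ (α - 1) * ((ω * s ^ α) ^ k / Real.Gamma (k * α + 1)) =
          Real.Gamma α / ω * ((ω * t ^ α) ^ (k + 1) / Real.Gamma ((k + 1 : ℕ) * α + 1)) := by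
      rw [← mul_integral_sub_rpow_mul_pow_div_Gamma hα ω ht k]
      field_simp
    simp only [hI]
    exact (hasSum_mittagLeffler_sub_one hα _).summable.mul_left _

theorem mul_integral_sub_rpow_mul_mittagLeffler {α ω t : ℝ} (hα : 0 < α) (hω : 0 < ω)
    (ht : 0 ≤ t) :
    ω / Real.Gamma α * ∫ s in (0 : ℝ)..t, (t - s) ^ (α - 1) * mittagLeffler α (ω * s ^ α) =
      mittagLeffler α (ω * t ^ α) - 1 :=
  ((hasSum_integral_sub_rpow_mul_mittagLeffler hα hω ht).mul_left _).unique <| by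
    simpa only [mul_integral_sub_rpow_mul_pow_div_Gamma hα ω ht] using
      hasSum_mittagLeffler_sub_one hα (ω * t ^ α)

theorem mittagLeffler_integral_identity (α ω t : ℝ)
    (hα : 0 < α) (hω : 0 < ω) (ht : 0 ≤ t) :
    (ω / Real.Gamma α) *
        (∫ s in (0 : ℝ)..t, (t - s) ^ (α - 1) * mittagLeffler α (ω * s ^ α)) =
      mittagLeffler α (ω * t ^ α) - 1 ∧
    (∫ s in (0 : ℝ)..t, (t - s) ^ (α - 1) * mittagLeffler α (ω * s ^ α)) ≤
      (Real.Gamma α / ω) * mittagLeffler α (ω * t ^ α) := by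
  have h := mul_integral_sub_rpow_mul_mittagLeffler hα hω ht
  refine ⟨h, ?_⟩
  calc ∫ s in (0 : ℝ)..t, (t - s) ^ (α - 1) * mittagLeffler α (ω * s ^ α)
      = Real.Gamma α / ω * (mittagLeffler α (ω * t ^ α) - 1) := by
        rw [← h]
        field_simp
    _ ≤ Real.Gamma α / ω * mittagLeffler α (ω * t ^ α) := by
        gcongr
        exact sub_le_self _ zero_le_one
end

section
/- Under the hypotheses of the preceding contraction result (f Lipschitz in the second variable with constant L_f, K bounded by s^{α-1} exp(|λ| s^{α-β} + |μ| s^α), g continuous), the fixed point equation y(t) = g(t) + ∫_0^t K(t-s) f(s, y(s)) ds has a unique solution y ∈ C([0,T], ℝ). -/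
open MeasureTheory Set Filter Real Function
open scoped NNReal

/-!
On `[0, T]` the kernel bound `s ^ (α - 1) * exp (|λ| s ^ (α - β) + |μ| s ^ α)` is at most a constant
`M`, so the equation is a Volterra equation `y = Φ y` with a bounded measurable kernel. Then
`|Φ y t - Φ z t| ≤ ∫₀ᵗ M L_f |y s - z s| ds`, and measuring `y - z` in the Bielecki norm
`sup_t exp (-ω t) |y t|` makes `Φ` a contraction with constant `M L_f / ω < 1` for `ω > M L_f`.
Multiplying by the weight `exp (ω t)` identifies this norm with the sup norm of `C([0, T], ℝ)`,
where the Banach fixed point theorem applies.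
-/

/-- `‖Φ y - Φ z‖_ω ≤ c ‖y - z‖_ω` for continuous `y, z`, where
`‖y‖_ω = sup_{t ∈ [0, T]} exp (-ω t) |y t|` is the Bielecki norm. -/
def BieleckiLipschitzWith (T ω c : ℝ) (Φ : (ℝ → ℝ) → ℝ → ℝ) : Prop :=
  ∀ y z : ℝ → ℝ, ContinuousOn y (Icc 0 T) → ContinuousOn z (Icc 0 T) → ∀ D : ℝ,
    (∀ s ∈ Icc 0 T, |y s - z s| ≤ D * exp (ω * s)) →
    ∀ t ∈ Icc 0 T, |Φ y t - Φ z t| ≤ c * D * exp (ω * t)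

lemma BieleckiLipschitzWith.eqOn {T ω c : ℝ} {Φ : (ℝ → ℝ) → ℝ → ℝ}
    (hΦ : BieleckiLipschitzWith T ω c Φ) {y z : ℝ → ℝ} (hy : ContinuousOn y (Icc 0 T))
    (hz : ContinuousOn z (Icc 0 T)) (hyz : EqOn y z (Icc 0 T)) :
    EqOn (Φ y) (Φ z) (Icc 0 T) := fun t ht => by
  have := hΦ y z hy hz 0 (fun s hs => by simp [hyz hs]) t ht
  rw [mul_zero, zero_mul] at this
  exact sub_eq_zero.1 (abs_nonpos_iff.1 this)

section Weighted

variable {T : ℝ} (hT : 0 ≤ T) (ω : ℝ)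

noncomputable def weightedExtend (x : C(Icc 0 T, ℝ)) (s : ℝ) : ℝ := exp (ω * s) * IccExtend hT x s

lemma continuous_weightedExtend (x : C(Icc 0 T, ℝ)) : Continuous (weightedExtend hT ω x) :=
  (continuous_exp.comp (continuous_const_mul ω)).mul x.continuous.Icc_extend'

lemma weightedExtend_of_mem (x : C(Icc 0 T, ℝ)) {s : ℝ} (hs : s ∈ Icc 0 T) :
    weightedExtend hT ω x s = exp (ω * s) * x ⟨s, hs⟩ := by
  rw [weightedExtend, IccExtend_of_mem hT _ hs]

lemma abs_weightedExtend_sub_le (x x' : C(Icc 0 T, ℝ)) (s : ℝ) :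
    |weightedExtend hT ω x s - weightedExtend hT ω x' s| ≤ dist x x' * exp (ω * s) := by
  rw [weightedExtend, weightedExtend, ← mul_sub, abs_mul, abs_of_pos (exp_pos _), mul_comm]
  gcongr
  rw [← Real.dist_eq]
  exact ContinuousMap.dist_apply_le_dist _

/-- Conjugating by the weight `exp (ω t)` turns the Bielecki norm into the sup norm. -/
noncomputable def weightedConj (Φ : (ℝ → ℝ) → ℝ → ℝ)
    (hΦ : ∀ y, ContinuousOn y (Icc 0 T) → ContinuousOn (Φ y) (Icc 0 T)) :
    C(Icc 0 T, ℝ) → C(Icc 0 T, ℝ) := fun x =>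
  ⟨fun t => exp (-(ω * t)) * Φ (weightedExtend hT ω x) t,
    (by fun_prop : Continuous fun t : Icc 0 T => exp (-(ω * t))).mul
      (hΦ _ (continuous_weightedExtend hT ω x).continuousOn).domRestrict⟩

variable {ω} {Φ : (ℝ → ℝ) → ℝ → ℝ}
  (hΦ : ∀ y, ContinuousOn y (Icc 0 T) → ContinuousOn (Φ y) (Icc 0 T))

lemma contractingWith_weightedConj {c : ℝ≥0} (hc : c < 1) (hlip : BieleckiLipschitzWith T ω c Φ) :
    ContractingWith c (weightedConj hT ω Φ hΦ) := by
  refine ⟨hc, LipschitzWith.of_dist_le_mul fun x x' => ?_⟩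
  rw [ContinuousMap.dist_le (by positivity)]
  intro t
  have hxx' := hlip _ _ (continuous_weightedExtend hT ω x).continuousOn
    (continuous_weightedExtend hT ω x').continuousOn _
    (fun s _ => abs_weightedExtend_sub_le hT ω x x' s) t t.2
  calc dist (weightedConj hT ω Φ hΦ x t) (weightedConj hT ω Φ hΦ x' t)
      = exp (-(ω * t)) * |Φ (weightedExtend hT ω x) t - Φ (weightedExtend hT ω x') t| := by
        simp only [weightedConj, ContinuousMap.coe_mk]
        rw [Real.dist_eq, ← mul_sub, abs_mul, abs_of_pos (exp_pos _)]
    _ ≤ exp (-(ω * t)) * (c * dist x x' * exp (ω * t)) := by gcongr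
    _ = c * dist x x' := by rw [mul_left_comm, ← exp_add, neg_add_cancel, exp_zero, mul_one]

end Weighted

theorem exists_unique_fixedPoint_of_bieleckiLipschitzWith {T ω : ℝ} {c : ℝ≥0}
    {Φ : (ℝ → ℝ) → ℝ → ℝ} (hT : 0 ≤ T) (hc : c < 1)
    (hΦ : ∀ y, ContinuousOn y (Icc 0 T) → ContinuousOn (Φ y) (Icc 0 T))
    (hlip : BieleckiLipschitzWith T ω c Φ) :
    ∃ y, ContinuousOn y (Icc 0 T) ∧ EqOn y (Φ y) (Icc 0 T) ∧
      ∀ z, ContinuousOn z (Icc 0 T) → EqOn z (Φ z) (Icc 0 T) → EqOn z y (Icc 0 T) := by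
  have hΨ := contractingWith_weightedConj hT hΦ hc hlip
  set x := ContractingWith.fixedPoint _ hΨ
  have hx : ∀ t, x t = exp (-(ω * t)) * Φ (weightedExtend hT ω x) t := fun t =>
    (DFunLike.congr_fun hΨ.fixedPoint_isFixedPt t).symm
  refine ⟨weightedExtend hT ω x, (continuous_weightedExtend hT ω x).continuousOn,
    fun t ht => ?_, fun z hz hzΦ t ht => ?_⟩
  · rw [weightedExtend_of_mem hT ω x ht, hx, ← mul_assoc, ← exp_add, add_neg_cancel, exp_zero,
      one_mul]
  · let ζ : C(Icc 0 T, ℝ) := ⟨fun t => exp (-(ω * t)) * z t,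
      (by fun_prop : Continuous fun t : Icc 0 T => exp (-(ω * t))).mul hz.domRestrict⟩
    have hzζ : EqOn z (weightedExtend hT ω ζ) (Icc 0 T) := fun s hs => by
      rw [weightedExtend_of_mem hT ω ζ hs, ContinuousMap.coe_mk, ← mul_assoc, ← exp_add,
        add_neg_cancel, exp_zero, one_mul]
    have hζ : IsFixedPt (weightedConj hT ω Φ hΦ) ζ := by
      ext t
      rw [weightedConj, ContinuousMap.coe_mk, ContinuousMap.coe_mk,
        ← hlip.eqOn hz (continuous_weightedExtend hT ω ζ).continuousOn hzζ t.2, ← hzΦ t.2]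
    rw [hzζ ht, hΨ.fixedPoint_unique' hζ hΨ.fixedPoint_isFixedPt]

lemma integral_exp_mul_le {ω t : ℝ} (hω : 0 < ω) :
    ∫ s in (0 : ℝ)..t, exp (ω * s) ≤ exp (ω * t) / ω := by
  rw [intervalIntegral.integral_comp_mul_left (fun s => exp s) hω.ne', integral_exp, mul_zero,
    exp_zero, smul_eq_mul, inv_mul_eq_div]
  gcongr
  linarith

section Kernel

variable {K H : ℝ → ℝ} {T M t : ℝ}

lemma intervalIntegrable_kernel_mul (hK : Measurable K) (hKM : ∀ u ∈ Icc 0 T, |K u| ≤ M)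
    (hH : ContinuousOn H (Icc 0 T)) (ht : t ∈ Icc 0 T) :
    IntervalIntegrable (fun s => K (t - s) * H s) volume 0 t := by
  rw [intervalIntegrable_iff_integrableOn_Ioc_of_le ht.1]
  have hH' : IntegrableOn H (Ioc 0 t) :=
    ((hH.mono (Icc_subset_Icc_right ht.2)).integrableOn_Icc).mono_set Ioc_subset_Icc_self
  refine hH'.bdd_mul (c := M) (hK.comp (measurable_const.sub measurable_id)).aestronglyMeasurable
    (ae_restrict_of_forall_mem measurableSet_Ioc fun s hs => ?_)
  exact hKM _ ⟨by linarith [hs.2], by linarith [hs.1, ht.2]⟩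

lemma abs_integral_kernel_mul_le {C ω : ℝ} (hKM : ∀ u ∈ Icc 0 T, |K u| ≤ M)
    (hHC : ∀ s ∈ Icc 0 T, |H s| ≤ C * exp (ω * s)) (hω : 0 < ω)
    (ht : t ∈ Icc 0 T) :
    |∫ s in (0 : ℝ)..t, K (t - s) * H s| ≤ M * C / ω * exp (ω * t) := by
  have hT : 0 ∈ Icc 0 T := ⟨le_rfl, ht.1.trans ht.2⟩
  have hM : 0 ≤ M := (abs_nonneg _).trans (hKM 0 hT)
  have hC : 0 ≤ C := by simpa using (abs_nonneg _).trans (hHC 0 hT)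
  calc |∫ s in (0 : ℝ)..t, K (t - s) * H s| ≤ ∫ s in (0 : ℝ)..t, M * C * exp (ω * s) := by
        rw [← Real.norm_eq_abs]
        refine intervalIntegral.norm_integral_le_of_norm_le ht.1 (ae_of_all volume fun s hs => ?_)
          ((by fun_prop : Continuous fun s => M * C * exp (ω * s)).intervalIntegrable _ _)
        have hts : t - s ∈ Icc 0 T := ⟨by linarith [hs.2], by linarith [hs.1, ht.2]⟩
        rw [Real.norm_eq_abs, abs_mul, mul_assoc]
        exact mul_le_mul (hKM _ hts) (hHC s ⟨hs.1.le, hs.2.trans ht.2⟩) (abs_nonneg _) hM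
    _ = M * C * ∫ s in (0 : ℝ)..t, exp (ω * s) := intervalIntegral.integral_const_mul _ _
    _ ≤ M * C * (exp (ω * t) / ω) := by gcongr; exact integral_exp_mul_le hω
    _ = M * C / ω * exp (ω * t) := by ring

lemma integral_kernel_mul_eq_integral_indicator (ht : t ∈ Icc 0 T) :
    ∫ s in (0 : ℝ)..t, K (t - s) * H s =
      ∫ u in (0 : ℝ)..T, {u | u ≤ t}.indicator (fun u => K u * H (t - u)) u := by
  rw [intervalIntegral.integral_indicator ht]
  simpa using intervalIntegral.integral_comp_sub_left (fun u => K u * H (t - u)) t (a := 0) (b := t)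

lemma continuous_integral_indicator_kernel_mul {C : ℝ} (hT : 0 ≤ T) (hK : Measurable K)
    (hKM : ∀ u ∈ Icc 0 T, |K u| ≤ M) (hH : Continuous H) (hHC : ∀ s, |H s| ≤ C) :
    Continuous fun t => ∫ u in (0 : ℝ)..T, {u | u ≤ t}.indicator (fun u => K u * H (t - u)) u := by
  have hM : 0 ≤ M := (abs_nonneg _).trans (hKM 0 ⟨le_rfl, hT⟩)
  refine continuous_iff_continuousAt.2 fun t₀ => ?_
  refine intervalIntegral.continuousAt_of_dominated_interval (bound := fun _ => M * C)
    (Eventually.of_forall fun t => ?_) (Eventually.of_forall fun t => ?_)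
    intervalIntegrable_const ?_
  · exact ((hK.mul (hH.measurable.comp (measurable_const.sub measurable_id))).indicator
      measurableSet_Iic).aestronglyMeasurable
  · refine Eventually.of_forall fun u hu => ?_
    rw [uIoc_of_le hT] at hu
    by_cases hut : u ≤ t
    · simpa [hut, abs_mul] using
        mul_le_mul (hKM u (Ioc_subset_Icc_self hu)) (hHC _) (abs_nonneg _) hM
    · simpa [hut] using mul_nonneg hM ((abs_nonneg _).trans (hHC 0))
  · filter_upwards [measure_eq_zero_iff_ae_notMem.1 (measure_singleton t₀)] with u hu _
    rcases (Ne.symm hu).lt_or_gt with hgt | hlt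
    · refine (continuousAt_const (y := (0 : ℝ))).congr ?_
      filter_upwards [eventually_lt_nhds hgt] with t ht
      simp [not_le.2 ht]
    · have hcont : Continuous fun t => K u * H (t - u) := by fun_prop
      refine hcont.continuousAt.congr ?_
      filter_upwards [eventually_gt_nhds hlt] with t ht
      simp [ht.le]

lemma continuousOn_integral_kernel_mul (hK : Measurable K) (hKM : ∀ u ∈ Icc 0 T, |K u| ≤ M)
    (hH : ContinuousOn H (Icc 0 T)) :
    ContinuousOn (fun t => ∫ s in (0 : ℝ)..t, K (t - s) * H s) (Icc 0 T) := by
  rcases lt_or_ge T 0 with hT | hT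
  · simp [Icc_eq_empty_of_lt hT]
  set H' := IccExtend hT ((Icc 0 T).domRestrict H)
  have hH' : Continuous H' := (continuousOn_iff_continuous_domRestrict.1 hH).Icc_extend'
  obtain ⟨C, hC⟩ := (isCompact_Icc (a := (0 : ℝ)) (b := T)).exists_bound_of_continuousOn hH
  refine (continuous_integral_indicator_kernel_mul hT hK hKM hH'
    (fun s => hC _ (projIcc 0 T hT s).2)).continuousOn.congr fun t ht => ?_
  refine (intervalIntegral.integral_congr fun s hs => ?_).trans
    (integral_kernel_mul_eq_integral_indicator ht)
  rw [uIcc_of_le ht.1] at hs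
  simp [H', IccExtend_of_mem hT _ ⟨hs.1, hs.2.trans ht.2⟩]

end Kernel

lemma ContinuousOn.comp_graph {α β γ : Type*} [TopologicalSpace α] [TopologicalSpace β]
    [TopologicalSpace γ] {f : α → β → γ} {s : Set α} {y : α → β}
    (hf : ContinuousOn (fun p : α × β => f p.1 p.2) (s ×ˢ univ)) (hy : ContinuousOn y s) :
    ContinuousOn (fun a => f a (y a)) s :=
  hf.comp (continuousOn_id.prodMk hy) fun _ ha => ⟨ha, mem_univ _⟩

noncomputable def volterraOperator (K : ℝ → ℝ) (f : ℝ → ℝ → ℝ) (g y : ℝ → ℝ) (t : ℝ) : ℝ :=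
  g t + ∫ s in (0 : ℝ)..t, K (t - s) * f s (y s)

section Volterra

variable {K : ℝ → ℝ} {f : ℝ → ℝ → ℝ} {g : ℝ → ℝ} {T M L : ℝ}

lemma continuousOn_volterraOperator (hK : Measurable K) (hKM : ∀ u ∈ Icc 0 T, |K u| ≤ M)
    (hf : ContinuousOn (fun p : ℝ × ℝ => f p.1 p.2) (Icc 0 T ×ˢ univ))
    (hg : ContinuousOn g (Icc 0 T)) {y : ℝ → ℝ} (hy : ContinuousOn y (Icc 0 T)) :
    ContinuousOn (volterraOperator K f g y) (Icc 0 T) :=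
  hg.add <| continuousOn_integral_kernel_mul hK hKM (hf.comp_graph hy)

lemma bieleckiLipschitzWith_volterraOperator (hK : Measurable K)
    (hKM : ∀ u ∈ Icc 0 T, |K u| ≤ M)
    (hf : ContinuousOn (fun p : ℝ × ℝ => f p.1 p.2) (Icc 0 T ×ˢ univ))
    (hf_lip : ∀ t ∈ Icc 0 T, ∀ y z : ℝ, |f t y - f t z| ≤ L * |y - z|) {ω : ℝ} (hω : 0 < ω) :
    BieleckiLipschitzWith T ω (M * L / ω) (volterraOperator K f g) := by
  intro y z hy hz D hyz t ht
  have hL : 0 ≤ L := by simpa using (abs_nonneg _).trans (hf_lip t ht 1 0)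
  have hdiff : volterraOperator K f g y t - volterraOperator K f g z t =
      ∫ s in (0 : ℝ)..t, K (t - s) * (f s (y s) - f s (z s)) := by
    simp only [volterraOperator, mul_sub]
    rw [intervalIntegral.integral_sub (intervalIntegrable_kernel_mul hK hKM (hf.comp_graph hy) ht)
      (intervalIntegrable_kernel_mul hK hKM (hf.comp_graph hz) ht)]
    ring
  rw [hdiff]
  refine (abs_integral_kernel_mul_le hKM (C := L * D) (fun s hs => ?_) hω ht).trans_eq (by ring)
  calc |f s (y s) - f s (z s)| ≤ L * |y s - z s| := hf_lip s hs _ _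
    _ ≤ L * (D * exp (ω * s)) := mul_le_mul_of_nonneg_left (hyz s hs) hL
    _ = L * D * exp (ω * s) := by ring

theorem volterra_exists_unique_solution (hT : 0 ≤ T) (hK : Measurable K)
    (hKM : ∀ u ∈ Icc 0 T, |K u| ≤ M)
    (hf : ContinuousOn (fun p : ℝ × ℝ => f p.1 p.2) (Icc 0 T ×ˢ univ))
    (hf_lip : ∀ t ∈ Icc 0 T, ∀ y z : ℝ, |f t y - f t z| ≤ L * |y - z|)
    (hg : ContinuousOn g (Icc 0 T)) :
    ∃ y, ContinuousOn y (Icc 0 T) ∧ EqOn y (volterraOperator K f g y) (Icc 0 T) ∧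
      ∀ z, ContinuousOn z (Icc 0 T) → EqOn z (volterraOperator K f g z) (Icc 0 T) →
        EqOn z y (Icc 0 T) := by
  have hM : 0 ≤ M := (abs_nonneg _).trans (hKM 0 ⟨le_rfl, hT⟩)
  have hL : 0 ≤ L := by simpa using (abs_nonneg _).trans (hf_lip 0 ⟨le_rfl, hT⟩ 1 0)
  have hω : 0 < M * L + 1 := by positivity
  have hc : M * L / (M * L + 1) < 1 := (div_lt_one hω).2 (lt_add_one _)
  exact exists_unique_fixedPoint_of_bieleckiLipschitzWith (c := ⟨_, by positivity⟩) hT hc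
    (fun y hy => continuousOn_volterraOperator hK hKM hf hg hy)
    (bieleckiLipschitzWith_volterraOperator hK hKM hf hf_lip hω)

end Volterra

theorem existence_uniqueness_general (α β lam mu T Lf : ℝ)
    (hα1 : 1 < α) (hαβ : α - β > 1)
    (hT : 0 < T)
    (f : ℝ → ℝ → ℝ)
    (hf_cont : ContinuousOn (fun p : ℝ × ℝ => f p.1 p.2)
      (Set.Icc 0 T ×ˢ Set.univ))
    (hf_lip : ∀ t ∈ Set.Icc (0 : ℝ) T, ∀ y z : ℝ, |f t y - f t z| ≤ Lf * |y - z|)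
    (K : ℝ → ℝ) (hK_meas : Measurable K)
    (hK : ∀ s ∈ Set.Icc (0 : ℝ) T,
      |K s| ≤ s ^ (α - 1) * Real.exp (|lam| * s ^ (α - β) + |mu| * s ^ α))
    (g : ℝ → ℝ) (hg : Continuous g) :
    ∃ y : ℝ → ℝ, ContinuousOn y (Set.Icc 0 T) ∧
      (∀ t ∈ Set.Icc (0 : ℝ) T,
        y t = g t + ∫ s in (0 : ℝ)..t, K (t - s) * f s (y s)) ∧
      (∀ z : ℝ → ℝ, ContinuousOn z (Set.Icc 0 T) →
        (∀ t ∈ Set.Icc (0 : ℝ) T,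
          z t = g t + ∫ s in (0 : ℝ)..t, K (t - s) * f s (z s)) →
        ∀ t ∈ Set.Icc (0 : ℝ) T, z t = y t) := by
  have hKM : ∀ s ∈ Icc 0 T,
      |K s| ≤ T ^ (α - 1) * exp (|lam| * T ^ (α - β) + |mu| * T ^ α) := fun s hs =>
    (hK s hs).trans (by gcongr <;> linarith [hs.1, hs.2])
  obtain ⟨y, hy, hy_sol, hy_unique⟩ :=
    volterra_exists_unique_solution hT.le hK_meas hKM hf_cont hf_lip hg.continuousOn
  exact ⟨y, hy, fun t ht => hy_sol ht, fun z hz hz_sol t ht => hy_unique z hz (hz_sol · ·) ht⟩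

theorem existence_uniqueness (α β lam mu T Lf : ℝ)
    (hα1 : 1 < α) (hα2 : α < 2) (hβ0 : 0 < β) (hβ1 : β < 1) (hαβ : α - β > 1)
    (hT : 0 < T) (hLf : 0 < Lf)
    (f : ℝ → ℝ → ℝ)
    (hf_cont : ContinuousOn (fun p : ℝ × ℝ => f p.1 p.2)
      (Set.Icc 0 T ×ˢ Set.univ))
    (hf_lip : ∀ t ∈ Set.Icc (0 : ℝ) T, ∀ y z : ℝ, |f t y - f t z| ≤ Lf * |y - z|)
    (K : ℝ → ℝ) (hK_meas : Measurable K)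
    (hK : ∀ s ∈ Set.Icc (0 : ℝ) T,
      |K s| ≤ s ^ (α - 1) * Real.exp (|lam| * s ^ (α - β) + |mu| * s ^ α))
    (g : ℝ → ℝ) (hg : Continuous g) :
    ∃ y : ℝ → ℝ, ContinuousOn y (Set.Icc 0 T) ∧
      (∀ t ∈ Set.Icc (0 : ℝ) T,
        y t = g t + ∫ s in (0 : ℝ)..t, K (t - s) * f s (y s)) ∧
      (∀ z : ℝ → ℝ, ContinuousOn z (Set.Icc 0 T) →
        (∀ t ∈ Set.Icc (0 : ℝ) T,
          z t = g t + ∫ s in (0 : ℝ)..t, K (t - s) * f s (z s)) →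
        ∀ t ∈ Set.Icc (0 : ℝ) T, z t = y t) :=
  existence_uniqueness_general α β lam mu T Lf hα1 hαβ hT f hf_cont hf_lip K hK_meas hK g hg
end
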